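/- Let (I_n) be an interval partition of ℕ with |I_{n+1}| ≥ n · ∑_{i≤n} |I_i| for all n. Let 0 < j < k-1 and let A ⊆ ℕ be a (j,k)-set, i.e., |A ∩ I_n|/|I_n| ∈ [j/k, (j+1)/k] for all but finitely many n. If π is a permutation of ℕ fixing each I_n setwise such that for infinitely many n the image π[A ∩ I_n] is an initial segment of I_n, then the upper density of π[A] equals 1; in particular π[A] has no asymptotic density. -/

import Mathlib

open Filter Topology

open scoped Classical in
noncomputable def cnt (A : Set ℕ) (n : ℕ) : ℕ :=
  ((Finset.range n).filter (fun m => m ∈ A)).card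

open scoped Classical in
noncomputable def cntIn (A : Set ℕ) (a b : ℕ) : ℕ :=
  ((Finset.Ico a b).filter (fun m => m ∈ A)).card

def dens (A : Set ℕ) (r : ℝ) : Prop :=
  Tendsto (fun n => (cnt A n : ℝ) / n) atTop (𝓝 r)

/-!
Inside each block `I_n = [e n, e (n+1))` the set `π[A]` has the same number of elements as `A`,
between `j/k` and `(j+1)/k` of `|I_n|`. The growth condition gives `n * e n ≤ e (n+1)`, so
everything before `I_n` is a fraction at most `1/n` of `[0, e (n+1))`.
When `π[A ∩ I_n]` is an initial segment `[e n, t)` of `I_n`, the segment is at least `(n-1)/k` times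
longer than `[0, e n)`, so the density of `π[A]` at `t` is close to `1`; at the right end `e (n+1)`
of every late block it is at most `(j+1)/k + 1/n`, which stays away from `1`.
-/

open Set
open scoped Classical

lemma cntIn_eq_ncard (A : Set ℕ) (a b : ℕ) : cntIn A a b = (A ∩ Ico a b).ncard := by
  rw [cntIn, ← Set.ncard_coe_finset]
  congr 1
  ext m
  simp [and_comm]

lemma cnt_le (A : Set ℕ) (n : ℕ) : cnt A n ≤ n :=
  (Finset.card_filter_le _ _).trans (Finset.card_range n).le

lemma cnt_le_add_cntIn (A : Set ℕ) {a b : ℕ} (hab : a ≤ b) : cnt A b ≤ a + cntIn A a b := by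
  rw [cnt, cntIn, Finset.range_eq_Ico, ← Finset.Ico_union_Ico_eq_Ico (Nat.zero_le a) hab,
    Finset.filter_union]
  refine (Finset.card_union_le _ _).trans (Nat.add_le_add_right ?_ _)
  exact (Finset.card_filter_le _ _).trans (by simp)

lemma sub_le_cnt_of_Ico_subset {B : Set ℕ} {a t : ℕ} (h : Ico a t ⊆ B) : t - a ≤ cnt B t := by
  rw [← Nat.card_Ico, cnt]
  refine Finset.card_le_card fun m hm => ?_
  rw [Finset.mem_Ico] at hm
  exact Finset.mem_filter.mpr ⟨Finset.mem_range.mpr hm.2, h hm⟩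

lemma cnt_div_mem_Icc (A : Set ℕ) (n : ℕ) : (cnt A n : ℝ) / n ∈ Icc 0 1 :=
  ⟨by positivity, div_le_one_of_le₀ (by exact_mod_cast cnt_le A n) n.cast_nonneg⟩

lemma Equiv.Perm.image_inter_eq_of_mapsTo {α : Type*} (π : Equiv.Perm α) {s : Set α}
    (hs : s.Finite) (hπ : MapsTo π s s) (A : Set α) : π '' A ∩ s = π '' (A ∩ s) := by
  refine Subset.antisymm ?_ fun y hy => ?_
  · rintro _ ⟨⟨x, hxA, rfl⟩, hxs⟩
    obtain ⟨x', hx's, hx'⟩ := ((hs.injOn_iff_bijOn_of_mapsTo hπ).mp π.injective.injOn).surjOn hxs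
    exact ⟨x, ⟨hxA, π.injective hx' ▸ hx's⟩, rfl⟩
  · obtain ⟨x, ⟨hxA, hxs⟩, rfl⟩ := hy
    exact ⟨mem_image_of_mem π hxA, hπ hxs⟩

lemma cntIn_image_perm (π : Equiv.Perm ℕ) (A : Set ℕ) {a b : ℕ}
    (hπ : MapsTo π (Ico a b) (Ico a b)) : cntIn (π '' A) a b = cntIn A a b := by
  rw [cntIn_eq_ncard, cntIn_eq_ncard, π.image_inter_eq_of_mapsTo (finite_Ico a b) hπ,
    ncard_image_of_injective _ π.injective]

lemma mul_le_apply_succ_of_mul_sum_le {e : ℕ → ℕ} (he0 : e 0 = 0) (he : Monotone e)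
    (hlen : ∀ n : ℕ, n * (∑ i ∈ Finset.range (n + 1), (e (i + 1) - e i)) ≤ e (n + 2) - e (n + 1))
    (n : ℕ) : n * e n ≤ e (n + 1) := by
  rcases n with _ | n
  · simp
  have h := hlen n
  rw [Finset.sum_range_tsub he, he0, Nat.sub_zero] at h
  rw [add_one_mul]
  exact Nat.add_le_of_le_sub (he (n + 1).le_succ) h

lemma cnt_div_le_add_inv {B : Set ℕ} {a b n : ℕ} {d : ℝ} (hn : 0 < n) (hab : n * a ≤ b)
    (hd : 0 ≤ d) (hB : (cntIn B a b : ℝ) ≤ d * ((b - a : ℕ) : ℝ)) :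
    (cnt B b : ℝ) / b ≤ d + 1 / n := by
  have hab' : a ≤ b := (Nat.le_mul_of_pos_left a hn).trans hab
  rcases (Nat.zero_le b).eq_or_lt with rfl | hb
  · simp only [Nat.cast_zero, div_zero]; positivity
  have hcnt : (cnt B b : ℝ) ≤ a + cntIn B a b := by exact_mod_cast cnt_le_add_cntIn B hab'
  have ha : (a : ℝ) ≤ b / n := by
    rw [le_div_iff₀ (by exact_mod_cast hn), mul_comm]
    exact_mod_cast hab
  rw [Nat.cast_sub hab'] at hB
  rw [div_le_iff₀ (by exact_mod_cast hb), add_mul, div_mul_eq_mul_div, one_mul]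
  have : (0 : ℝ) ≤ d * a := by positivity
  linarith

lemma one_sub_le_cnt_div {B : Set ℕ} {a b t n : ℕ} {c : ℝ} (hc : 0 < c) (hn : 2 ≤ n) (ha : 0 < a)
    (hab : n * a ≤ b) (hB : Ico a t ⊆ B) (hbt : c * ((b - a : ℕ) : ℝ) ≤ ((t - a : ℕ) : ℝ)) :
    a < t ∧ 1 - 1 / (c * (n - 1)) ≤ (cnt B t : ℝ) / t := by
  have hab' : a ≤ b := (Nat.le_mul_of_pos_left a (by omega)).trans hab
  have hn1 : (0 : ℝ) < n - 1 := by
    have : (2 : ℝ) ≤ n := by exact_mod_cast hn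
    linarith
  have hab_real : ((n : ℝ) - 1) * a ≤ b - a := by
    have : (n : ℝ) * a ≤ b := by exact_mod_cast hab
    linarith
  have hseg : c * ((n - 1) * a) ≤ ((t - a : ℕ) : ℝ) := by
    rw [Nat.cast_sub hab'] at hbt
    exact (mul_le_mul_of_nonneg_left hab_real hc.le).trans hbt
  have hpos : (0 : ℝ) < ((t - a : ℕ) : ℝ) := lt_of_lt_of_le (by positivity) hseg
  have hat : a < t := by
    by_contra h
    simp [Nat.sub_eq_zero_of_le (not_lt.mp h)] at hpos
  refine ⟨hat, ?_⟩
  have hcnt : ((t - a : ℕ) : ℝ) ≤ cnt B t := by exact_mod_cast sub_le_cnt_of_Ico_subset hB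
  rw [Nat.cast_sub hat.le] at hseg hcnt hpos
  have ht : (0 : ℝ) < t := by linarith
  -- `a / t ≤ a / (t - a) ≤ 1 / (c (n - 1))`
  have hfrac : (a : ℝ) / t ≤ 1 / (c * (n - 1)) := by
    rw [div_le_div_iff₀ ht (by positivity)]
    nlinarith
  calc 1 - 1 / (c * (n - 1)) ≤ 1 - (a : ℝ) / t := by linarith
    _ = (t - a) / t := by field_simp
    _ ≤ (cnt B t : ℝ) / t := by gcongr

lemma limsup_eq_of_le_of_frequently_ge {f : ℕ → ℝ} {a : ℝ} (hf : ∀ n, f n ∈ Icc 0 a)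
    (hfreq : ∀ ε > 0, ∃ᶠ n in atTop, a - ε ≤ f n) : limsup f atTop = a := by
  have hbdd : IsBoundedUnder (· ≤ ·) atTop f := isBoundedUnder_of ⟨a, fun n => (hf n).2⟩
  refine le_antisymm (limsup_le_of_le (isCoboundedUnder_le_of_le atTop fun n => (hf n).1)
    (Eventually.of_forall fun n => (hf n).2)) (le_of_forall_sub_le fun ε hε => ?_)
  exact le_limsup_of_frequently_le (hfreq ε hε) hbdd

lemma frequently_one_sub_le_cnt_div {e : ℕ → ℕ} (he : StrictMono e)
    (hgrowth : ∀ n, n * e n ≤ e (n + 1)) {B : Set ℕ} {c : ℝ} (hc : 0 < c)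
    (hseg : ∃ᶠ n in atTop, ∃ t, Ico (e n) t ⊆ B ∧
      c * ((e (n + 1) - e n : ℕ) : ℝ) ≤ ((t - e n : ℕ) : ℝ))
    {ε : ℝ} (hε : 0 < ε) : ∃ᶠ t in atTop, 1 - ε ≤ (cnt B t : ℝ) / t := by
  have hsmall : ∀ᶠ n : ℕ in atTop, 1 / (c * (n - 1)) < ε :=
    (tendsto_const_nhds.div_atTop (Tendsto.const_mul_atTop hc
      (tendsto_atTop_add_const_right _ (-1) tendsto_natCast_atTop_atTop))).eventually
      (eventually_lt_nhds hε)
  rw [frequently_atTop]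
  intro M
  obtain ⟨n, ⟨t, hB, hbt⟩, hnε, hn⟩ :=
    (hseg.and_eventually (hsmall.and (eventually_ge_atTop (max M 2)))).exists
  have hn2 : 2 ≤ n := le_of_max_le_right hn
  obtain ⟨hnt, hratio⟩ := one_sub_le_cnt_div hc hn2
    ((two_pos.trans_le hn2).trans_le (he.id_le n)) (hgrowth n) hB hbt
  exact ⟨t, ((le_of_max_le_left hn).trans (he.id_le n)).trans hnt.le, by linarith⟩

lemma not_tendsto_cnt_div_nhds_one {e : ℕ → ℕ} (he : StrictMono e)
    (hgrowth : ∀ n, n * e n ≤ e (n + 1)) {B : Set ℕ} {d : ℝ} (hd0 : 0 ≤ d) (hd1 : d < 1)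
    (hB : ∀ᶠ n in atTop, (cntIn B (e n) (e (n + 1)) : ℝ) ≤ d * ((e (n + 1) - e n : ℕ) : ℝ)) :
    ¬ Tendsto (fun n => (cnt B n : ℝ) / n) atTop (𝓝 1) := by
  intro h1
  have hend : Tendsto (fun n => (cnt B (e (n + 1)) : ℝ) / e (n + 1)) atTop (𝓝 1) :=
    h1.comp (he.tendsto_atTop.comp (tendsto_add_atTop_nat 1))
  have hbound : Tendsto (fun n : ℕ => d + 1 / n) atTop (𝓝 d) := by
    simpa using (tendsto_const_nhds (x := d)).add tendsto_one_div_atTop_nhds_zero_nat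
  have hle : ∀ᶠ n : ℕ in atTop, (cnt B (e (n + 1)) : ℝ) / e (n + 1) ≤ d + 1 / n := by
    filter_upwards [hB, eventually_ge_atTop 1] with n hn hn1
    exact cnt_div_le_add_inv hn1 (hgrowth n) hd0 hn
  linarith [le_of_tendsto_of_tendsto hend hbound hle]

theorem stmt6 (e : ℕ → ℕ) (he0 : e 0 = 0) (heM : StrictMono e)
    (hlen : ∀ n : ℕ, n * (∑ i ∈ Finset.range (n + 1), (e (i + 1) - e i)) ≤ e (n + 2) - e (n + 1))
    (j k : ℕ) (hj : 0 < j) (hjk : j + 1 < k) (A : Set ℕ)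
    (hA : ∀ᶠ n in atTop,
      (j : ℝ) / k ≤ (cntIn A (e n) (e (n + 1)) : ℝ) / ((e (n + 1) - e n : ℕ) : ℝ) ∧
      (cntIn A (e n) (e (n + 1)) : ℝ) / ((e (n + 1) - e n : ℕ) : ℝ) ≤ ((j : ℝ) + 1) / k)
    (π : Equiv.Perm ℕ)
    (hfix : ∀ n m : ℕ, m ∈ Set.Ico (e n) (e (n + 1)) → π m ∈ Set.Ico (e n) (e (n + 1)))
    (hinit : {n : ℕ | ∃ t ≤ e (n + 1),
        π '' (A ∩ Set.Ico (e n) (e (n + 1))) = Set.Ico (e n) t}.Infinite) :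
    Filter.limsup (fun n => (cnt (π '' A) n : ℝ) / n) atTop = 1 ∧
    ¬ ∃ r : ℝ, dens (π '' A) r := by
  have hgrowth : ∀ n, n * e n ≤ e (n + 1) := mul_le_apply_succ_of_mul_sum_le he0 heM.monotone hlen
  have hL : ∀ n, (0 : ℝ) < ((e (n + 1) - e n : ℕ) : ℝ) := fun n => by
    exact_mod_cast Nat.sub_pos_of_lt (heM n.lt_succ_self)
  have hk : (0 : ℝ) < k := by exact_mod_cast (by omega : 0 < k)
  have hseg : ∃ᶠ n in atTop, ∃ t, Ico (e n) t ⊆ π '' A ∧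
      (j / k : ℝ) * ((e (n + 1) - e n : ℕ) : ℝ) ≤ ((t - e n : ℕ) : ℝ) := by
    refine ((Nat.frequently_atTop_iff_infinite.mpr hinit).and_eventually hA).mono ?_
    rintro n ⟨⟨t, -, himage⟩, hlow, -⟩
    refine ⟨t, himage ▸ image_mono inter_subset_left, ?_⟩
    rw [cntIn_eq_ncard, ← ncard_image_of_injective _ π.injective, himage, ncard_Ico_nat] at hlow
    exact (le_div_iff₀ (hL n)).mp hlow
  have hlimsup : limsup (fun n => (cnt (π '' A) n : ℝ) / n) atTop = 1 :=
    limsup_eq_of_le_of_frequently_ge (cnt_div_mem_Icc (π '' A)) fun ε hε =>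
      frequently_one_sub_le_cnt_div heM hgrowth (div_pos (by exact_mod_cast hj) hk) hseg hε
  refine ⟨hlimsup, fun ⟨r, hr⟩ => ?_⟩
  obtain rfl : r = 1 := hlimsup ▸ hr.limsup_eq.symm
  refine not_tendsto_cnt_div_nhds_one heM hgrowth (d := (j + 1) / k) (by positivity) ?_ ?_ hr
  · rw [div_lt_one hk]
    exact_mod_cast hjk
  · filter_upwards [hA] with n hn
    rw [cntIn_image_perm π A (hfix n)]
    exact (div_le_iff₀ (hL n)).mp hn.2
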